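/- arXiv:1903.04863 — 5 statements merged into one kernel-verified Lean document; each statement's English description precedes it below -/
import Mathlib

section
/- Suppose every graph on n vertices with at most δn³ triangles can be made triangle-free by deleting at most ε(δ)·n² edges, where ε is monotone. Then every graph on n ≥ 2 vertices in which each edge lies in exactly one triangle has at most 3·ε(1/n)·n² edges. -/
/-!
Each edge lies in exactly one triangle, so the triangles are edge-disjoint and
`#E = 3 · #T`. In particular `#T ≤ n² = (1/n) · n³`, so the removal hypothesis with `δ = 1/n`
yields a set `S` of at most `ε(1/n) · n²` edges whose deletion leaves no triangle. Since the
triangles are edge-disjoint, `S` must contain a distinct edge of each of them, so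
`#E = 3 · #T ≤ 3 · #S ≤ 3 · ε(1/n) · n²`.
-/

open Finset SimpleGraph

namespace SimpleGraph

variable {V : Type*} [Fintype V] [DecidableEq V] {G : SimpleGraph V} [DecidableRel G.Adj]

lemma locallyLinear_of_existsUnique
    (h : ∀ u v, G.Adj u v → ∃! t, t ∈ G.cliqueFinset 3 ∧ u ∈ t ∧ v ∈ t) : G.LocallyLinear := by
  refine ⟨fun x hx y hy hxy a ha b hb => ?_, fun u v huv => ?_⟩
  · by_contra hab
    have hx3 : G.IsNClique 3 x := hx
    exact hxy ((h a b (hx3.1 ha.1 hb.1 hab)).unique ⟨mem_cliqueFinset_iff.mpr hx3, ha.1, hb.1⟩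
      ⟨mem_cliqueFinset_iff.mpr hy, ha.2, hb.2⟩)
  · obtain ⟨t, ⟨ht, hu, hv⟩, -⟩ := h u v huv
    exact ⟨t, mem_cliqueFinset_iff.mp ht, hu, hv⟩

lemma cliqueFree_deleteEdges_of_forall_exists_mem {k : ℕ} {S : Finset (Sym2 V)}
    (hS : ∀ t ∈ G.cliqueFinset k, ∃ u v, u ∈ t ∧ v ∈ t ∧ G.Adj u v ∧ s(u, v) ∈ S) :
    (G.deleteEdges S).CliqueFree k := by
  intro t ht
  obtain ⟨u, v, hu, hv, huv, huvS⟩ :=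
    hS t (mem_cliqueFinset_iff.mpr (ht.mono (deleteEdges_le _)))
  exact (deleteEdges_adj.mp (ht.1 hu hv huv.ne)).2 huvS

lemma EdgeDisjointTriangles.three_mul_card_cliqueFinset_le_choose_two
    (hG : G.EdgeDisjointTriangles) : 3 * #(G.cliqueFinset 3) ≤ (Fintype.card V).choose 2 :=
  hG.card_edgeFinset_le.trans G.card_edgeFinset_le_card_choose_two

/-- Edge-disjointness makes `G` `#T / |V|²`-far from triangle-free. -/
lemma EdgeDisjointTriangles.card_cliqueFinset_le_card (hG : G.EdgeDisjointTriangles)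
    {S : Finset (Sym2 V)} (hS : S ⊆ G.edgeFinset) (hfree : (G.deleteEdges S).CliqueFree 3) :
    #(G.cliqueFinset 3) ≤ #S := by
  rcases isEmpty_or_nonempty V with hV | hV
  · rw [cliqueFinset_eq_empty_iff.mpr (cliqueFree_of_card_lt (by simp [Fintype.card_eq_zero]))]
    simp
  have hV2 : ((Fintype.card V ^ 2 : ℕ) : ℚ) ≠ 0 := by positivity
  have hfar := hG.farFromTriangleFree (ε := (#(G.cliqueFinset 3) : ℚ) / (Fintype.card V ^ 2 : ℕ))
    (div_mul_cancel₀ _ hV2).le hS hfree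
  rw [div_mul_cancel₀ _ hV2] at hfar
  exact_mod_cast hfar

end SimpleGraph

theorem diamond_free_lemma_from_removal_general (ε : ℝ → ℝ)
    (hrem : ∀ (n : ℕ) (G : SimpleGraph (Fin n)) [DecidableRel G.Adj] (δ : ℝ), 0 < δ →
      ((G.cliqueFinset 3).card : ℝ) ≤ δ * n ^ 3 →
      ∃ S ⊆ G.edgeFinset, (S.card : ℝ) ≤ ε δ * n ^ 2 ∧
        ∀ t ∈ G.cliqueFinset 3, ∃ u v : Fin n, u ∈ t ∧ v ∈ t ∧ G.Adj u v ∧ s(u, v) ∈ S) :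
    ∀ (n : ℕ), 2 ≤ n → ∀ (G : SimpleGraph (Fin n)) [DecidableRel G.Adj],
      (∀ u v : Fin n, G.Adj u v →
        ∃! t : Finset (Fin n), t ∈ G.cliqueFinset 3 ∧ u ∈ t ∧ v ∈ t) →
      (G.edgeFinset.card : ℝ) ≤ 3 * ε (1 / n) * n ^ 2 := by
  intro n hn G _ huniq
  have hG := locallyLinear_of_existsUnique huniq
  have hn0 : (0 : ℝ) < n := by positivity
  have htri : ((G.cliqueFinset 3).card : ℝ) ≤ 1 / n * n ^ 3 := by
    have h := hG.edgeDisjointTriangles.three_mul_card_cliqueFinset_le_choose_two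
    rw [Fintype.card_fin] at h
    have : (G.cliqueFinset 3).card ≤ n ^ 2 := by linarith [Nat.choose_le_pow n 2]
    calc ((G.cliqueFinset 3).card : ℝ) ≤ n ^ 2 := by exact_mod_cast this
      _ = 1 / n * n ^ 3 := by field_simp
  obtain ⟨S, hSE, hScard, hShit⟩ := hrem n G (1 / n) (by positivity) htri
  have hTS := hG.edgeDisjointTriangles.card_cliqueFinset_le_card hSE
    (cliqueFree_deleteEdges_of_forall_exists_mem hShit)
  calc (G.edgeFinset.card : ℝ) = 3 * (G.cliqueFinset 3).card := by
        exact_mod_cast hG.card_edgeFinset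
    _ ≤ 3 * S.card := by gcongr
    _ ≤ 3 * (ε (1 / n) * n ^ 2) := by gcongr
    _ = 3 * ε (1 / n) * n ^ 2 := by ring

theorem diamond_free_lemma_from_removal (ε : ℝ → ℝ) (hmono : Antitone ε)
    (hrem : ∀ (n : ℕ) (G : SimpleGraph (Fin n)) [DecidableRel G.Adj] (δ : ℝ), 0 < δ →
      ((G.cliqueFinset 3).card : ℝ) ≤ δ * n ^ 3 →
      ∃ S ⊆ G.edgeFinset, (S.card : ℝ) ≤ ε δ * n ^ 2 ∧
        ∀ t ∈ G.cliqueFinset 3, ∃ u v : Fin n, u ∈ t ∧ v ∈ t ∧ G.Adj u v ∧ s(u, v) ∈ S) :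
    ∀ (n : ℕ), 2 ≤ n → ∀ (G : SimpleGraph (Fin n)) [DecidableRel G.Adj],
      (∀ u v : Fin n, G.Adj u v →
        ∃! t : Finset (Fin n), t ∈ G.cliqueFinset 3 ∧ u ∈ t ∧ v ∈ t) →
      (G.edgeFinset.card : ℝ) ≤ 3 * ε (1 / n) * n ^ 2 :=
  diamond_free_lemma_from_removal_general ε hrem
end

section
/- Let G be a graph on n vertices in which every edge lies in exactly one triangle, and let H be the 3-uniform hypergraph on the same vertex set whose edges are the triangles of G. Then every homomorphism from the triforce (the 3-uniform hypergraph on vertices {1,2,3,1',2',3'} with edges {1,2,3'}, {1,2',3}, {1',2,3}) to H maps all six vertices into a single edge of H; consequently the number of triforce homomorphisms into H equals 6 times the number of edges of H. -/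
open Finset SimpleGraph

/-- An ordered triangle in a graph. -/
def IsTriangle {V : Type*} (G : SimpleGraph V) (x y z : V) : Prop :=
  G.Adj x y ∧ G.Adj y z ∧ G.Adj x z

set_option maxHeartbeats 1000000 in
theorem triforce_homs_into_diamond_free (V : Type*) [Fintype V] [DecidableEq V]
    (G : SimpleGraph V)
    (hdf : ∀ u v : V, G.Adj u v → ∃! w : V, G.Adj u w ∧ G.Adj v w) :
    (∀ x y z x' y' z' : V,
      IsTriangle G x' y z → IsTriangle G x y' z → IsTriangle G x y z' →
        IsTriangle G x y z ∧ x' = x ∧ y' = y ∧ z' = z) ∧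
    {p : V × V × V × V × V × V |
        IsTriangle G p.2.2.2.1 p.2.1 p.2.2.1 ∧
        IsTriangle G p.1 p.2.2.2.2.1 p.2.2.1 ∧
        IsTriangle G p.1 p.2.1 p.2.2.2.2.2}.ncard
      = 6 * {t : Finset V | ∃ x y z : V, IsTriangle G x y z ∧ t = {x, y, z}}.ncard := by
  classical
  have part1 : ∀ x y z x' y' z' : V,
      IsTriangle G x' y z → IsTriangle G x y' z → IsTriangle G x y z' →
        IsTriangle G x y z ∧ x' = x ∧ y' = y ∧ z' = z := by
    intro x y z x' y' z' h1 h2 h3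
    obtain ⟨hx'y, hyz, hx'z⟩ := h1
    obtain ⟨hxy', hy'z, hxz⟩ := h2
    obtain ⟨hxy, hyz', hxz'⟩ := h3
    refine ⟨⟨hxy, hyz, hxz⟩, ?_, ?_, ?_⟩
    · obtain ⟨w, hw, huniq⟩ := hdf y z hyz
      exact (huniq x' ⟨hx'y.symm, hx'z.symm⟩).trans (huniq x ⟨hxy.symm, hxz.symm⟩).symm
    · obtain ⟨w, hw, huniq⟩ := hdf x z hxz
      exact (huniq y' ⟨hxy', hy'z.symm⟩).trans (huniq y ⟨hxy, hyz.symm⟩).symm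
    · obtain ⟨w, hw, huniq⟩ := hdf x y hxy
      exact (huniq z' ⟨hxz', hyz'⟩).trans (huniq z ⟨hxz, hyz⟩).symm
  refine ⟨part1, ?_⟩
  -- the big set is the image of the ordered-triangle set under the diagonal map
  set S : Set (V × V × V) := {q | IsTriangle G q.1 q.2.1 q.2.2} with hS
  have hset : {p : V × V × V × V × V × V |
        IsTriangle G p.2.2.2.1 p.2.1 p.2.2.1 ∧
        IsTriangle G p.1 p.2.2.2.2.1 p.2.2.1 ∧
        IsTriangle G p.1 p.2.1 p.2.2.2.2.2}
      = (fun q : V × V × V => (q.1, q.2.1, q.2.2, q.1, q.2.1, q.2.2)) '' S := by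
    ext ⟨x, y, z, x', y', z'⟩
    simp only [Set.mem_setOf_eq, Set.mem_image, Prod.mk.injEq, hS]
    constructor
    · rintro ⟨h1, h2, h3⟩
      obtain ⟨ht, hx, hy, hz⟩ := part1 x y z x' y' z' h1 h2 h3
      exact ⟨(x, y, z), ht, rfl, rfl, rfl, hx.symm, hy.symm, hz.symm⟩
    · rintro ⟨⟨a, b, c⟩, ht, rfl, rfl, rfl, rfl, rfl, rfl⟩
      exact ⟨ht, ht, ht⟩
  have hinj : Function.Injective
      (fun q : V × V × V => (q.1, q.2.1, q.2.2, q.1, q.2.1, q.2.2)) := by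
    intro p q h
    simp only [Prod.mk.injEq] at h
    obtain ⟨h1, h2, h3, _⟩ := h
    exact Prod.ext h1 (Prod.ext h2 h3)
  rw [hset, Set.ncard_image_of_injective _ hinj]
  -- now count ordered triangles as 6 times unordered triangles
  set T : Set (Finset V) := {t | ∃ x y z : V, IsTriangle G x y z ∧ t = {x, y, z}} with hT
  rw [Set.ncard_eq_toFinset_card _ (Set.toFinite S),
    Set.ncard_eq_toFinset_card _ (Set.toFinite T)]
  set Sf := (Set.toFinite S).toFinset with hSf
  set Tf := (Set.toFinite T).toFinset with hTf
  have hmap : ∀ q ∈ Sf, ({q.1, q.2.1, q.2.2} : Finset V) ∈ Tf := by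
    rintro ⟨a, b, c⟩ hq
    rw [hSf, Set.Finite.mem_toFinset] at hq
    rw [hTf, Set.Finite.mem_toFinset]
    exact ⟨a, b, c, hq, rfl⟩
  rw [Finset.card_eq_sum_card_fiberwise hmap]
  have hfib : ∀ t ∈ Tf,
      (Sf.filter (fun q : V × V × V => ({q.1, q.2.1, q.2.2} : Finset V) = t)).card = 6 := by
    intro t ht
    rw [hTf, Set.Finite.mem_toFinset] at ht
    obtain ⟨x, y, z, htri, rfl⟩ := ht
    obtain ⟨hxy, hyz, hxz⟩ := htri
    have hxy' := hxy.ne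
    have hyz' := hyz.ne
    have hxz' := hxz.ne
    have hfe : Sf.filter (fun q : V × V × V => ({q.1, q.2.1, q.2.2} : Finset V) = {x, y, z})
        = {(x, y, z), (x, z, y), (y, x, z), (y, z, x), (z, x, y), (z, y, x)} := by
      ext ⟨a, b, c⟩
      simp only [Finset.mem_filter, hSf, Set.Finite.mem_toFinset, hS, Set.mem_setOf_eq,
        Finset.mem_insert, Finset.mem_singleton, Prod.mk.injEq]
      constructor
      · rintro ⟨⟨hab, hbc, hac⟩, hset3⟩
        have ha : a ∈ ({x, y, z} : Finset V) := by
          rw [← hset3]; simp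
        have hb : b ∈ ({x, y, z} : Finset V) := by
          rw [← hset3]; simp
        have hc : c ∈ ({x, y, z} : Finset V) := by
          rw [← hset3]; simp
        simp only [Finset.mem_insert, Finset.mem_singleton] at ha hb hc
        have hab' := hab.ne
        have hbc' := hbc.ne
        have hac' := hac.ne
        clear hdf part1 hset hinj hmap hset3 hab hbc hac hxy hyz hxz
        rcases ha with rfl | rfl | rfl <;> rcases hb with rfl | rfl | rfl <;>
          rcases hc with rfl | rfl | rfl <;>
          first
            | exact (hab' rfl).elim
            | exact (hbc' rfl).elim
            | exact (hac' rfl).elim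
            | tauto
      · rintro (⟨rfl, rfl, rfl⟩ | ⟨rfl, rfl, rfl⟩ | ⟨rfl, rfl, rfl⟩ | ⟨rfl, rfl, rfl⟩ |
          ⟨rfl, rfl, rfl⟩ | ⟨rfl, rfl, rfl⟩) <;>
        refine ⟨⟨?_, ?_, ?_⟩, ?_⟩ <;>
        first
          | assumption
          | exact hxy.symm
          | exact hyz.symm
          | exact hxz.symm
          | (ext u; simp; try tauto)
    rw [hfe]
    rw [Finset.card_insert_of_notMem (by simp [Prod.ext_iff]; tauto),
      Finset.card_insert_of_notMem (by simp [Prod.ext_iff]; tauto),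
      Finset.card_insert_of_notMem (by simp [Prod.ext_iff]; tauto),
      Finset.card_insert_of_notMem (by simp [Prod.ext_iff]; tauto),
      Finset.card_insert_of_notMem (by simp [Prod.ext_iff]; tauto),
      Finset.card_singleton]
  rw [Finset.sum_congr rfl hfib, Finset.sum_const, smul_eq_mul, Nat.mul_comm]
end

section
/- There is an absolute constant c > 0 such that for every integer L > 0 there exists Λ ⊆ {0, 1, …, L−1} with |Λ| ≥ L·exp(−c√(log L)) containing no nontrivial solution to x + y + z = 3w, where a solution (x, y, z, w) is nontrivial unless x = y = z = w. -/
open Finset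

section Aux

open Nat Real Behrend

/-- Geometric key: four points on the same integer sphere with x+y+z = 3w are all equal. -/
lemma sphere_eq_of_avg {n k : ℕ} {X Y Z W : Fin n → ℕ}
    (hX : ∑ i, X i ^ 2 = k) (hY : ∑ i, Y i ^ 2 = k) (hZ : ∑ i, Z i ^ 2 = k)
    (hW : ∑ i, W i ^ 2 = k) (h : ∀ i, X i + Y i + Z i = W i + W i + W i) :
    X = W ∧ Y = W ∧ Z = W := by
  have h' : ∀ i, (X i : ℤ) + Y i + Z i = 3 * W i := by
    intro i; have := h i; omega
  have hX' : ∑ i, (X i : ℤ) ^ 2 = (k : ℤ) := by exact_mod_cast congrArg (Nat.cast (R := ℤ)) hX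
  have hY' : ∑ i, (Y i : ℤ) ^ 2 = (k : ℤ) := by exact_mod_cast congrArg (Nat.cast (R := ℤ)) hY
  have hZ' : ∑ i, (Z i : ℤ) ^ 2 = (k : ℤ) := by exact_mod_cast congrArg (Nat.cast (R := ℤ)) hZ
  have hW' : ∑ i, (W i : ℤ) ^ 2 = (k : ℤ) := by exact_mod_cast congrArg (Nat.cast (R := ℤ)) hW
  have expand : ∀ i ∈ Finset.univ,
      ((X i : ℤ) - W i) ^ 2 + ((Y i : ℤ) - W i) ^ 2 + ((Z i : ℤ) - W i) ^ 2
        = ((X i : ℤ) ^ 2 + (Y i : ℤ) ^ 2 + (Z i : ℤ) ^ 2) - 3 * (W i : ℤ) ^ 2 := by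
    intro i _
    linear_combination (-2 * (W i : ℤ)) * h' i
  have key : ∑ i, (((X i : ℤ) - W i) ^ 2 + ((Y i : ℤ) - W i) ^ 2 + ((Z i : ℤ) - W i) ^ 2) = 0 := by
    rw [Finset.sum_congr rfl expand, Finset.sum_sub_distrib, Finset.sum_add_distrib,
      Finset.sum_add_distrib, ← Finset.mul_sum, hX', hY', hZ', hW']
    ring
  have each : ∀ i ∈ Finset.univ,
      ((X i : ℤ) - W i) ^ 2 + ((Y i : ℤ) - W i) ^ 2 + ((Z i : ℤ) - W i) ^ 2 = 0 :=
    (Finset.sum_eq_zero_iff_of_nonneg (fun i _ => by positivity)).1 key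
  have comp : ∀ i, X i = W i ∧ Y i = W i ∧ Z i = W i := by
    intro i
    have h0 := each i (Finset.mem_univ i)
    have e1 : ((X i : ℤ) - W i) ^ 2 = 0 := by nlinarith [sq_nonneg ((Y i : ℤ) - W i), sq_nonneg ((Z i : ℤ) - W i), sq_nonneg ((X i : ℤ) - W i)]
    have e2 : ((Y i : ℤ) - W i) ^ 2 = 0 := by nlinarith [sq_nonneg ((Y i : ℤ) - W i), sq_nonneg ((Z i : ℤ) - W i), sq_nonneg ((X i : ℤ) - W i)]
    have e3 : ((Z i : ℤ) - W i) ^ 2 = 0 := by nlinarith [sq_nonneg ((Y i : ℤ) - W i), sq_nonneg ((Z i : ℤ) - W i), sq_nonneg ((X i : ℤ) - W i)]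
    refine ⟨?_, ?_, ?_⟩ <;>
      [skip; skip; skip]
    · exact_mod_cast sub_eq_zero.1 (sq_eq_zero_iff.1 e1)
    · exact_mod_cast sub_eq_zero.1 (sq_eq_zero_iff.1 e2)
    · exact_mod_cast sub_eq_zero.1 (sq_eq_zero_iff.1 e3)
  exact ⟨funext fun i => (comp i).1, funext fun i => (comp i).2.1, funext fun i => (comp i).2.2⟩

lemma map_lt_pow {n B : ℕ} {x : Fin n → ℕ} (hx : ∀ i, x i < B) :
    Behrend.map B x < B ^ n := by
  induction n with
  | zero => simp [Behrend.map]
  | succ m ih =>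
    rw [Behrend.map_succ']
    have h0 : x 0 < B := hx 0
    have hm : Behrend.map B (x ∘ Fin.succ) < B ^ m := ih (fun i => hx i.succ)
    calc x 0 + Behrend.map B (x ∘ Fin.succ) * B
        < B + Behrend.map B (x ∘ Fin.succ) * B := by omega
      _ = (Behrend.map B (x ∘ Fin.succ) + 1) * B := by ring
      _ ≤ B ^ m * B := Nat.mul_le_mul_right _ hm
      _ = B ^ (m + 1) := by ring

end Aux

section Main

open Real Behrend

set_option maxHeartbeats 1000000 in
/-- The main construction for large `L`. -/
lemma behrend_large (L : ℕ) (hL : 16777216 ≤ L) :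
    ∃ Λ ⊆ Finset.range L,
      (L : ℝ) * Real.exp (-12 * Real.sqrt (Real.log L)) ≤ (Λ.card : ℝ) ∧
      ∀ x ∈ Λ, ∀ y ∈ Λ, ∀ z ∈ Λ, ∀ w ∈ Λ,
        x + y + z = 3 * w → x = w ∧ y = w ∧ z = w := by
  have hL1 : (1 : ℝ) < L := by exact_mod_cast lt_of_lt_of_le (by norm_num) hL
  have hL0 : (0 : ℝ) < L := by linarith
  set s : ℝ := Real.sqrt (Real.log L) with hs_def
  have hlogL : (16 : ℝ) ≤ Real.log L := by
    have h2 : (2 : ℝ) ^ (24 : ℕ) ≤ (L : ℝ) := by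
      rw [show ((2 : ℝ) ^ (24 : ℕ)) = 16777216 by norm_num]
      exact_mod_cast hL
    have hlog := Real.log_le_log (by positivity) h2
    rw [Real.log_pow] at hlog
    push_cast at hlog
    nlinarith [Real.log_two_gt_d9]
  have hs4 : (4 : ℝ) ≤ s := by
    rw [hs_def, show (4 : ℝ) = Real.sqrt 16 by
      rw [show (16 : ℝ) = 4 ^ 2 by norm_num, Real.sqrt_sq (by norm_num)]]
    exact Real.sqrt_le_sqrt hlogL
  have hs0 : (0 : ℝ) < s := by linarith
  have hs_sq : s ^ 2 = Real.log L := Real.sq_sqrt (by linarith)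
  set n : ℕ := ⌈s⌉₊ with hn_def
  have hn_lo : s ≤ (n : ℝ) := Nat.le_ceil s
  have hn_hi : (n : ℝ) ≤ s + 1 := (Nat.ceil_lt_add_one hs0.le).le
  have hn0 : 0 < n := by
    have : (0 : ℝ) < n := lt_of_lt_of_le hs0 hn_lo
    exact_mod_cast this
  have hnR0 : (0 : ℝ) < n := by exact_mod_cast hn0
  set t : ℝ := (L : ℝ) ^ ((n : ℝ)⁻¹) with ht_def
  have ht0 : 0 < t := Real.rpow_pos_of_pos hL0 _
  have hlogt : Real.log t = s ^ 2 / n := by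
    rw [ht_def, Real.log_rpow hL0, hs_sq]; ring
  have hlogt_lo : s - 1 ≤ Real.log t := by
    rw [hlogt, le_div_iff₀ hnR0]
    nlinarith
  have hlogt_hi : Real.log t ≤ s := by
    rw [hlogt, div_le_iff₀ hnR0]
    nlinarith
  have ht_exp : t ≤ Real.exp s := by
    calc t = Real.exp (Real.log t) := (Real.exp_log ht0).symm
      _ ≤ Real.exp s := Real.exp_le_exp.2 hlogt_hi
  have ht12 : (12 : ℝ) ≤ t := by
    have h3 : (3 : ℝ) ≤ Real.log t := by linarith
    have : Real.exp 3 ≤ t := by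
      calc Real.exp 3 ≤ Real.exp (Real.log t) := Real.exp_le_exp.2 h3
        _ = t := Real.exp_log ht0
    refine le_trans ?_ this
    have he : (2.7182818283 : ℝ) < Real.exp 1 := Real.exp_one_gt_d9
    have h13 : Real.exp 3 = Real.exp 1 ^ 3 := by
      rw [← Real.exp_nat_mul]; norm_num
    have hcube : (2.7 : ℝ) ^ 3 ≤ Real.exp 1 ^ 3 := by
      apply pow_le_pow_left₀ (by norm_num)
      linarith
    rw [h13]
    nlinarith
  set d : ℕ := ⌊t / 3⌋₊ with hd_def
  have hd_up : (d : ℝ) ≤ t / 3 := Nat.floor_le (by positivity)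
  have hd_lo : t / 4 ≤ (d : ℝ) := by
    have h1 : t / 3 - 1 < (d : ℝ) := Nat.sub_one_lt_floor _
    nlinarith
  have hd1 : 1 ≤ d := by
    have : (1 : ℝ) ≤ d := by nlinarith
    exact_mod_cast this
  have hdR0 : (0 : ℝ) < d := by
    have := hd1; positivity
  -- the sphere with many points
  obtain ⟨k, hk⟩ := Behrend.exists_large_sphere n d
  set Λ : Finset ℕ := (Behrend.sphere n d k).image (Behrend.map (3 * d - 2)) with hΛ_def
  have hdigits : ∀ x ∈ Behrend.sphere n d k, ∀ i, x i < d := by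
    intro x hx i
    exact Behrend.mem_box.1 (Behrend.sphere_subset_box hx) i
  have hbase : d ≤ 3 * d - 2 := by omega
  -- cardinality
  have hcard : Λ.card = (Behrend.sphere n d k).card := by
    rw [hΛ_def]
    apply Finset.card_image_of_injOn
    apply Behrend.map_injOn.mono
    intro x hx i
    exact lt_of_lt_of_le (hdigits x hx i) hbase
  -- subset of range L
  have hpow_le : (3 * d) ^ n ≤ L := by
    have hreal : ((3 * d : ℕ) : ℝ) ^ n ≤ (L : ℝ) := by
      have h3d : ((3 * d : ℕ) : ℝ) ≤ t := by push_cast; linarith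
      calc ((3 * d : ℕ) : ℝ) ^ n ≤ t ^ n := by
            apply pow_le_pow_left₀ (by positivity) h3d _
        _ = (L : ℝ) := by
            rw [ht_def, ← Real.rpow_natCast ((L : ℝ) ^ ((n : ℝ)⁻¹)) n, ← Real.rpow_mul hL0.le,
              inv_mul_cancel₀ (by exact_mod_cast hn0.ne'), Real.rpow_one]
    exact_mod_cast hreal
  have hsubset : Λ ⊆ Finset.range L := by
    intro a ha
    rw [hΛ_def, Finset.mem_image] at ha
    obtain ⟨x, hx, rfl⟩ := ha
    rw [Finset.mem_range]
    have h1 : Behrend.map (3 * d - 2) x < (3 * d - 2) ^ n := by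
      apply map_lt_pow
      intro i
      have := hdigits x hx i
      omega
    have h2 : (3 * d - 2) ^ n ≤ (3 * d) ^ n := Nat.pow_le_pow_left (by omega) n
    omega
  -- cardinality bound
  have hcard_bound : (L : ℝ) * Real.exp (-12 * s) ≤ (Λ.card : ℝ) := by
    rw [hcard]
    refine le_trans ?_ hk
    -- d^n ≥ L / 4^n
    have hnum : (L : ℝ) / 4 ^ n ≤ ((d ^ n : ℕ) : ℝ) := by
      rw [div_le_iff₀ (by positivity)]
      push_cast
      have h4d : t ≤ 4 * d := by linarith
      calc (L : ℝ) = t ^ n := by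
            rw [ht_def, ← Real.rpow_natCast ((L : ℝ) ^ ((n : ℝ)⁻¹)) n, ← Real.rpow_mul hL0.le,
              inv_mul_cancel₀ (by exact_mod_cast hn0.ne'), Real.rpow_one]
        _ ≤ (4 * d) ^ n := pow_le_pow_left₀ ht0.le h4d n
        _ = (d : ℝ) ^ n * 4 ^ n := by rw [mul_pow]; ring
    -- n * d^2 ≤ exp (3s)
    have hden : ((n * d ^ 2 : ℕ) : ℝ) ≤ Real.exp (3 * s) := by
      push_cast
      have h1 : (n : ℝ) ≤ Real.exp s := le_trans hn_hi (by linarith [Real.add_one_le_exp s])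
      have h2 : (d : ℝ) ^ 2 ≤ Real.exp s * Real.exp s := by
        have hde : (d : ℝ) ≤ Real.exp s := le_trans hd_up (by linarith)
        rw [sq]
        exact mul_le_mul hde hde (by positivity) (Real.exp_pos s).le
      calc (n : ℝ) * (d : ℝ) ^ 2 ≤ Real.exp s * (Real.exp s * Real.exp s) := by
            apply mul_le_mul h1 h2 (by positivity) (by positivity)
        _ = Real.exp (3 * s) := by rw [← Real.exp_add, ← Real.exp_add]; ring_nf
    -- 4^n ≤ exp (2s)
    have h4n : (4 : ℝ) ^ n ≤ Real.exp (2 * s) := by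
      have h4 : (4 : ℝ) ≤ Real.exp 1.4 := by
        have : Real.log 4 ≤ 1.4 := by
          rw [show (4 : ℝ) = 2 ^ 2 by norm_num, Real.log_pow]
          nlinarith [Real.log_two_lt_d9]
        calc (4 : ℝ) = Real.exp (Real.log 4) := (Real.exp_log (by norm_num)).symm
          _ ≤ Real.exp 1.4 := Real.exp_le_exp.2 this
      calc (4 : ℝ) ^ n ≤ Real.exp 1.4 ^ n := pow_le_pow_left₀ (by norm_num) h4 n
        _ = Real.exp (n * 1.4) := (Real.exp_nat_mul _ _).symm
        _ ≤ Real.exp (2 * s) := by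
            apply Real.exp_le_exp.2
            nlinarith
    have hden0 : (0 : ℝ) < ((n * d ^ 2 : ℕ) : ℝ) := by
      have : 0 < n * d ^ 2 := by positivity
      exact_mod_cast this
    have h45 : (4 : ℝ) ^ n * Real.exp (3 * s) ≤ Real.exp (12 * s) := by
      calc (4 : ℝ) ^ n * Real.exp (3 * s) ≤ Real.exp (2 * s) * Real.exp (3 * s) := by
            apply mul_le_mul_of_nonneg_right h4n (Real.exp_pos _).le
        _ = Real.exp (5 * s) := by rw [← Real.exp_add]; ring_nf
        _ ≤ Real.exp (12 * s) := Real.exp_le_exp.2 (by nlinarith)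
    calc (L : ℝ) * Real.exp (-12 * s)
        = (L : ℝ) / Real.exp (12 * s) := by
          rw [show (-12 : ℝ) * s = -(12 * s) by ring, Real.exp_neg, div_eq_mul_inv]
      _ ≤ (L : ℝ) / ((4 : ℝ) ^ n * Real.exp (3 * s)) := by
          apply div_le_div_of_nonneg_left hL0.le (by positivity) h45
      _ = ((L : ℝ) / 4 ^ n) / Real.exp (3 * s) := by rw [div_div]
      _ ≤ ((d ^ n : ℕ) : ℝ) / ((n * d ^ 2 : ℕ) : ℝ) :=
          div_le_div₀ (by positivity) hnum hden0 hden
  exact ⟨Λ, hsubset, hcard_bound, by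
    intro x hx y hy z hz w hw hxyz
    rw [hΛ_def, Finset.mem_image] at hx hy hz hw
    obtain ⟨X, hX, rfl⟩ := hx
    obtain ⟨Y, hY, rfl⟩ := hy
    obtain ⟨Z, hZ, rfl⟩ := hz
    obtain ⟨W, hW, rfl⟩ := hw
    have hmap_eq : Behrend.map (3 * d - 2) (X + Y + Z) = Behrend.map (3 * d - 2) (W + W + W) := by
      rw [map_add, map_add, map_add, map_add]
      omega
    have heq : X + Y + Z = W + W + W := by
      apply Behrend.map_injOn _ _ hmap_eq
      · intro i
        simp only [Pi.add_apply]
        have := hdigits X hX i; have := hdigits Y hY i; have := hdigits Z hZ i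
        omega
      · intro i
        simp only [Pi.add_apply]
        have := hdigits W hW i
        omega
    have hXs : ∑ i, X i ^ 2 = k := (Finset.mem_filter.1 hX).2
    have hYs : ∑ i, Y i ^ 2 = k := (Finset.mem_filter.1 hY).2
    have hZs : ∑ i, Z i ^ 2 = k := (Finset.mem_filter.1 hZ).2
    have hWs : ∑ i, W i ^ 2 = k := (Finset.mem_filter.1 hW).2
    obtain ⟨h1, h2, h3⟩ := sphere_eq_of_avg hXs hYs hZs hWs (fun i => by
      have := congrFun heq i
      simpa using this)
    exact ⟨by rw [h1], by rw [h2], by rw [h3]⟩⟩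

end Main

theorem behrend_modified :
    ∃ c : ℝ, 0 < c ∧ ∀ L : ℕ, 0 < L →
      ∃ Λ ⊆ Finset.range L,
        (L : ℝ) * Real.exp (-c * Real.sqrt (Real.log L)) ≤ (Λ.card : ℝ) ∧
        ∀ x ∈ Λ, ∀ y ∈ Λ, ∀ z ∈ Λ, ∀ w ∈ Λ,
          x + y + z = 3 * w → x = w ∧ y = w ∧ z = w := by
  refine ⟨12, by norm_num, fun L hL => ?_⟩
  rcases le_or_gt 16777216 L with h | h
  · exact behrend_large L h
  · -- small case: Λ = {0}
    refine ⟨{0}, by simp [Finset.singleton_subset_iff, Finset.mem_range, hL], ?_, ?_⟩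
    · have hL1 : (1 : ℝ) ≤ L := by exact_mod_cast hL
      have hlog0 : 0 ≤ Real.log L := Real.log_nonneg hL1
      set u : ℝ := Real.sqrt (Real.log L) with hu
      have hu0 : 0 ≤ u := Real.sqrt_nonneg _
      have husq : u ^ 2 = Real.log L := Real.sq_sqrt hlog0
      have hu12 : u ≤ 12 := by
        have hlog_hi : Real.log L ≤ 144 := by
          have h1 : (L : ℝ) ≤ Real.exp 144 := by
            have h2 : (L : ℝ) ≤ 16777216 := by exact_mod_cast h.le
            have h3 : (2 : ℝ) ^ (144 : ℕ) ≤ Real.exp 1 ^ (144 : ℕ) := by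
              apply pow_le_pow_left₀ (by norm_num)
              linarith [Real.exp_one_gt_d9]
            have h4 : Real.exp 1 ^ (144 : ℕ) = Real.exp 144 := by
              rw [← Real.exp_nat_mul]; norm_num
            have h5 : (16777216 : ℝ) ≤ 2 ^ (144 : ℕ) := by norm_num
            linarith
          calc Real.log L ≤ Real.log (Real.exp 144) := Real.log_le_log (by exact_mod_cast hL) h1
            _ = 144 := Real.log_exp _
        nlinarith
      have : (L : ℝ) * Real.exp (-12 * u) ≤ 1 := by
        have hLe : (L : ℝ) = Real.exp (Real.log L) := (Real.exp_log (by exact_mod_cast hL)).symm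
        rw [hLe, ← Real.exp_add]
        rw [show (1 : ℝ) = Real.exp 0 by simp]
        apply Real.exp_le_exp.2
        nlinarith
      simpa using this
    · intro x hx y hy z hz w hw _
      simp only [Finset.mem_singleton] at hx hy hz hw
      subst hx; subst hy; subst hz; subst hw
      exact ⟨rfl, rfl, rfl⟩
end

section
/- Let L ≥ 1 and let Λ ⊆ {0, …, L−1} contain no nontrivial solution to a + b + c = 3d. For j ∈ Λ let I_j = [j/(3L), j/(3L) + 1/(9L)) ⊆ ℝ/ℤ and B = ⋃_{j∈Λ} I_j. Suppose w, x, y, z are real numbers with x + y + z = 3w and w, x, y, z mod 1 all lie in B. Then ‖w − z‖_{ℝ/ℤ} < 1/(9L). -/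
/-!
Scaling by `3L`, a point of `I_j` lies in `[j, j + 1/3)`. Since `x + y + z = 3w`, the fractional
parts satisfy `{x} + {y} + {z} - 3{w} = N` for an integer `N`, so the digits satisfy
`jx + jy + jz - 3 jw = 3LN` exactly (the error is less than `1`), and `0 ≤ j < L` forces `N = 0`.
The digit equation `jx + jy + jz = 3 jw` then has only the trivial solution, so `w` and `z` lie in
the same interval `I_j` modulo `1`, whose length is `1/(9L)`.
-/

open Finset

/-- Distance from a real number to the nearest integer. -/
noncomputable def distToInt (t : ℝ) : ℝ := |t - round t|

lemma distToInt_sub_le_abs_fract_sub (s t : ℝ) :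
    distToInt (s - t) ≤ |Int.fract s - Int.fract t| := by
  have h : Int.fract s - Int.fract t = s - t - ((⌊s⌋ - ⌊t⌋ : ℤ) : ℝ) := by
    simp only [Int.fract]; push_cast; ring
  rw [h]
  exact round_le _ _

lemma exists_fract_add_add_sub_eq_intCast {w x y z : ℝ} (h : x + y + z = 3 * w) :
    ∃ N : ℤ, Int.fract x + Int.fract y + Int.fract z - 3 * Int.fract w = N :=
  ⟨3 * ⌊w⌋ - ⌊x⌋ - ⌊y⌋ - ⌊z⌋, by simp only [Int.fract]; push_cast; linarith⟩

lemma mul_mem_Ico_of_mem_Ico {L : ℕ} (hL : 0 < L) {j : ℕ} {t : ℝ}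
    (ht : t ∈ Set.Ico ((j : ℝ) / (3 * L)) ((j : ℝ) / (3 * L) + 1 / (9 * L))) :
    3 * L * t ∈ Set.Ico (j : ℝ) (j + 1 / 3) := by
  obtain ⟨h₁, h₂⟩ := ht
  have h3L : (0 : ℝ) < 3 * L := by positivity
  have hend : (j : ℝ) / (3 * L) + 1 / (9 * L) = (j + 1 / 3) / (3 * L) := by
    field_simp; ring
  rw [div_le_iff₀' h3L] at h₁
  rw [hend, lt_div_iff₀' h3L] at h₂
  exact ⟨h₁, h₂⟩

lemma add_add_sub_three_mul_eq_of_mem_Ico {a b c d K : ℤ} {p q r s : ℝ}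
    (hp : p ∈ Set.Ico (a : ℝ) (a + 1 / 3)) (hq : q ∈ Set.Ico (b : ℝ) (b + 1 / 3))
    (hr : r ∈ Set.Ico (c : ℝ) (c + 1 / 3)) (hs : s ∈ Set.Ico (d : ℝ) (d + 1 / 3))
    (h : p + q + r - 3 * s = K) : a + b + c - 3 * d = K := by
  obtain ⟨hp₁, hp₂⟩ := hp
  obtain ⟨hq₁, hq₂⟩ := hq
  obtain ⟨hr₁, hr₂⟩ := hr
  obtain ⟨hs₁, hs₂⟩ := hs
  have h₁ : ((a + b + c - 3 * d - K : ℤ) : ℝ) < 1 := by push_cast; linarith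
  have h₂ : (-1 : ℝ) < ((a + b + c - 3 * d - K : ℤ) : ℝ) := by push_cast; linarith
  norm_cast at h₁ h₂
  omega

theorem close_mod_one_from_B_general (L : ℕ) (Λ : Finset ℕ)
    (hΛ : ∀ j ∈ Λ, j < L)
    (hsol : ∀ a ∈ Λ, ∀ b ∈ Λ, ∀ c ∈ Λ, ∀ d ∈ Λ,
      a + b + c = 3 * d → a = d ∧ b = d ∧ c = d)
    (B : Set ℝ)
    (hB : B = ⋃ j ∈ Λ, Set.Ico ((j : ℝ) / (3 * L)) ((j : ℝ) / (3 * L) + 1 / (9 * L)))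
    (w x y z : ℝ) (hsum : x + y + z = 3 * w)
    (hw : Int.fract w ∈ B) (hx : Int.fract x ∈ B)
    (hy : Int.fract y ∈ B) (hz : Int.fract z ∈ B) :
    distToInt (w - z) < 1 / (9 * L) := by
  subst hB
  simp only [Set.mem_iUnion₂] at hw hx hy hz
  obtain ⟨jw, hjw, hw⟩ := hw
  obtain ⟨jx, hjx, hx⟩ := hx
  obtain ⟨jy, hjy, hy⟩ := hy
  obtain ⟨jz, hjz, hz⟩ := hz
  have hL : 0 < L := (Nat.zero_le _).trans_lt (hΛ jw hjw)
  obtain ⟨N, hN⟩ := exists_fract_add_add_sub_eq_intCast hsum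
  have hdigits : (jx + jy + jz - 3 * jw : ℤ) = 3 * L * N := by
    refine add_add_sub_three_mul_eq_of_mem_Ico (mul_mem_Ico_of_mem_Ico hL hx)
      (mul_mem_Ico_of_mem_Ico hL hy) (mul_mem_Ico_of_mem_Ico hL hz)
      (mul_mem_Ico_of_mem_Ico hL hw) ?_
    push_cast; linear_combination 3 * (L : ℝ) * hN
  have hzero : (jx + jy + jz - 3 * jw : ℤ) = 0 := by
    refine Int.eq_zero_of_abs_lt_dvd ⟨N, hdigits⟩ (abs_lt.mpr ⟨?_, ?_⟩) <;>
      linarith [hΛ jx hjx, hΛ jy hjy, hΛ jz hjz, hΛ jw hjw]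
  obtain ⟨-, -, rfl⟩ := hsol jx hjx jy hjy jz hjz jw hjw (by omega)
  refine (distToInt_sub_le_abs_fract_sub w z).trans_lt (abs_sub_lt_iff.mpr ⟨?_, ?_⟩) <;>
    linarith [hw.1, hw.2, hz.1, hz.2]

theorem close_mod_one_from_B (L : ℕ) (hL : 1 ≤ L) (Λ : Finset ℕ)
    (hΛ : ∀ j ∈ Λ, j < L)
    (hsol : ∀ a ∈ Λ, ∀ b ∈ Λ, ∀ c ∈ Λ, ∀ d ∈ Λ,
      a + b + c = 3 * d → a = d ∧ b = d ∧ c = d)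
    (B : Set ℝ)
    (hB : B = ⋃ j ∈ Λ, Set.Ico ((j : ℝ) / (3 * L)) ((j : ℝ) / (3 * L) + 1 / (9 * L)))
    (w x y z : ℝ) (hsum : x + y + z = 3 * w)
    (hw : Int.fract w ∈ B) (hx : Int.fract x ∈ B)
    (hy : Int.fract y ∈ B) (hz : Int.fract z ∈ B) :
    distToInt (w - z) < 1 / (9 * L) :=
  close_mod_one_from_B_general L Λ hΛ hsol B hB w x y z hsum hw hx hy hz
end

section
/- Let Λ ⊆ {0,…,L−1} contain no nontrivial solution to a+b+c = 3d, and let B = ⋃_{j∈Λ} [j/(3L), j/(3L)+1/(9L)) ⊆ ℝ/ℤ. Let f(x,y,z) = (x−y)(x+y−2z), let α ∈ ℝ, and suppose α·f(n₁,n₂,n₃), α·f(n₁+d,n₂,n₃), α·f(n₁,n₂+d,n₃), α·f(n₁,n₂,n₃+d) all lie in B modulo 1. Then ‖2α(n₁−n₂)d‖_{ℝ/ℤ} < 1/(9L). -/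
open Finset

def triforceF (x y z : ℤ) : ℤ := (x - y) * (x + y - 2 * z)

theorem alpha_transfer (L : ℕ) (hL : 1 ≤ L) (Λ : Finset ℕ)
    (hΛ : ∀ j ∈ Λ, j < L)
    (hsol : ∀ a ∈ Λ, ∀ b ∈ Λ, ∀ c ∈ Λ, ∀ d ∈ Λ,
      a + b + c = 3 * d → a = d ∧ b = d ∧ c = d)
    (B : Set ℝ)
    (hB : B = ⋃ j ∈ Λ, Set.Ico ((j : ℝ) / (3 * L)) ((j : ℝ) / (3 * L) + 1 / (9 * L)))
    (α : ℝ) (n₁ n₂ n₃ d : ℤ)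
    (h0 : Int.fract (α * (triforceF n₁ n₂ n₃ : ℝ)) ∈ B)
    (h1 : Int.fract (α * (triforceF (n₁ + d) n₂ n₃ : ℝ)) ∈ B)
    (h2 : Int.fract (α * (triforceF n₁ (n₂ + d) n₃ : ℝ)) ∈ B)
    (h3 : Int.fract (α * (triforceF n₁ n₂ (n₃ + d) : ℝ)) ∈ B) :
    distToInt (2 * α * ((n₁ - n₂ : ℤ) : ℝ) * (d : ℝ)) < 1 / (9 * L) := by
  subst hB
  simp only [Set.mem_iUnion, Set.mem_Ico, exists_prop] at h0 h1 h2 h3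
  obtain ⟨j0, hj0Λ, hj0l, hj0u⟩ := h0
  obtain ⟨j1, hj1Λ, hj1l, hj1u⟩ := h1
  obtain ⟨j2, hj2Λ, hj2l, hj2u⟩ := h2
  obtain ⟨j3, hj3Λ, hj3l, hj3u⟩ := h3
  have hLpos : (0:ℝ) < L := by exact_mod_cast hL
  set F0 : ℝ := α * (triforceF n₁ n₂ n₃ : ℝ) with hF0
  set F1 : ℝ := α * (triforceF (n₁ + d) n₂ n₃ : ℝ) with hF1
  set F2 : ℝ := α * (triforceF n₁ (n₂ + d) n₃ : ℝ) with hF2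
  set F3 : ℝ := α * (triforceF n₁ n₂ (n₃ + d) : ℝ) with hF3
  have hsum : F1 + F2 + F3 = 3 * F0 := by
    simp only [hF0, hF1, hF2, hF3, triforceF]
    push_cast
    ring
  set m : ℤ := 3 * ⌊F0⌋ - ⌊F1⌋ - ⌊F2⌋ - ⌊F3⌋ with hm
  have hfracts : Int.fract F1 + Int.fract F2 + Int.fract F3 - 3 * Int.fract F0
      = (m : ℝ) := by
    simp only [Int.fract, hm]
    push_cast
    linarith
  have h3L : (0:ℝ) < 3 * L := by linarith
  -- clear denominators in the interval bounds
  have clear_l : ∀ (j : ℕ) (F : ℝ), (j : ℝ) / (3 * L) ≤ Int.fract F →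
      (j : ℝ) ≤ 3 * L * Int.fract F := by
    intro j F h
    have := (div_le_iff₀ h3L).mp h
    linarith
  have clear_u : ∀ (j : ℕ) (F : ℝ), Int.fract F < (j : ℝ) / (3 * L) + 1 / (9 * L) →
      3 * (L:ℝ) * Int.fract F < j + 1/3 := by
    intro j F h
    have heq : ((j:ℝ)) / (3 * L) + 1 / (9 * L) = ((j:ℝ) + 1/3) / (3 * L) := by
      field_simp; ring
    rw [heq] at h
    have := (lt_div_iff₀ h3L).mp h
    linarith
  have l0 := clear_l j0 F0 hj0l
  have u0 := clear_u j0 F0 hj0u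
  have l1 := clear_l j1 F1 hj1l
  have u1 := clear_u j1 F1 hj1u
  have l2 := clear_l j2 F2 hj2l
  have u2 := clear_u j2 F2 hj2u
  have l3 := clear_l j3 F3 hj3l
  have u3 := clear_u j3 F3 hj3u
  -- show 3 * L * m = j1 + j2 + j3 - 3 * j0
  have hkey : 3 * (L : ℤ) * m = (j1 : ℤ) + j2 + j3 - 3 * j0 := by
    have hmul : 3 * (L:ℝ) * (m:ℝ)
        = 3 * L * Int.fract F1 + 3 * L * Int.fract F2 + 3 * L * Int.fract F3
          - 3 * (3 * (L:ℝ) * Int.fract F0) := by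
      rw [← hfracts]; ring
    have hlt : |((3 * (L:ℤ) * m - ((j1 : ℤ) + j2 + j3 - 3 * j0) : ℤ) : ℝ)| < 1 := by
      rw [abs_lt]
      push_cast
      constructor <;> linarith [hmul]
    have hz : 3 * (L:ℤ) * m - ((j1 : ℤ) + j2 + j3 - 3 * j0) = 0 := by
      by_contra hne
      have h1 := Int.one_le_abs hne
      have : (1:ℝ) ≤ |((3 * (L:ℤ) * m - ((j1 : ℤ) + j2 + j3 - 3 * j0) : ℤ) : ℝ)| := by
        rw [← Int.cast_abs]; exact_mod_cast h1
      linarith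
    omega
  have hb0 := hΛ j0 hj0Λ
  have hb1 := hΛ j1 hj1Λ
  have hb2 := hΛ j2 hj2Λ
  have hb3 := hΛ j3 hj3Λ
  have hLZ : (1:ℤ) ≤ (L:ℤ) := by exact_mod_cast hL
  have hsnat : j1 + j2 + j3 = 3 * j0 := by
    have hm0 : m = 0 := by
      by_contra hne
      have h1 : 1 ≤ |m| := Int.one_le_abs hne
      have h2 : |3 * (L:ℤ) * m| = 3 * (L:ℤ) * |m| := by
        rw [abs_mul, abs_of_nonneg (by positivity : (0:ℤ) ≤ 3 * (L:ℤ))]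
      have h3 : 3 * (L:ℤ) ≤ 3 * (L:ℤ) * |m| := by nlinarith
      have h4 : |3 * (L:ℤ) * m| ≤ 3 * (L:ℤ) - 3 := by
        rw [hkey, abs_le]
        constructor <;> omega
      linarith
    rw [hm0, mul_zero] at hkey
    omega
  obtain ⟨_, _, hj30⟩ := hsol j1 hj1Λ j2 hj2Λ j3 hj3Λ j0 hj0Λ hsnat
  subst hj30
  -- now both fract F0 and fract F3 are in the same interval of length 1/(9L)
  have hx : 2 * α * ((n₁ - n₂ : ℤ) : ℝ) * (d : ℝ) = F0 - F3 := by
    simp only [hF0, hF3, triforceF]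
    push_cast
    ring
  rw [distToInt, hx]
  have hle := round_le (F0 - F3) (⌊F0⌋ - ⌊F3⌋)
  calc |F0 - F3 - round (F0 - F3)| ≤ |F0 - F3 - ((⌊F0⌋ - ⌊F3⌋ : ℤ) : ℝ)| := hle
    _ = |Int.fract F0 - Int.fract F3| := by
        simp only [Int.fract]; push_cast; ring_nf
    _ < 1 / (9 * L) := by
        rw [abs_lt]
        constructor <;> [linarith; linarith]
end
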